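/- Let R be any ring and GP the class of Gorenstein AC-projective chain complexes in Ch(R). Then the class GP^⊥ is thick and contains all projective objects of Ch(R). -/

import Mathlib

set_option linter.unusedVariables false

open CategoryTheory CategoryTheory.Limits ZeroObject

universe v u

namespace GorensteinAC





/-! ### General notions in an abelian category -/

section AbelianNotions

variable {𝒜 : Type u} [Category.{v} 𝒜] [Abelian 𝒜]

/-- `Ext¹(X,Y) = 0`, expressed by the (Yoneda) condition that every short exact
sequence `0 → Y → Z → X → 0` splits. -/
def Ext1IsZero (X Y : 𝒜) : Prop :=
  ∀ (Z : 𝒜) (i : Y ⟶ Z) (p : Z ⟶ X) (w : i ≫ p = 0),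
    (ShortComplex.mk i p w).ShortExact → ∃ s : X ⟶ Z, s ≫ p = 𝟙 X

/-- The right `Ext¹`-orthogonal of a class of objects. -/
def rightPerp (S : Set 𝒜) : Set 𝒜 := {Y | ∀ X ∈ S, Ext1IsZero X Y}

/-- The left `Ext¹`-orthogonal of a class of objects. -/
def leftPerp (S : Set 𝒜) : Set 𝒜 := {X | ∀ Y ∈ S, Ext1IsZero X Y}

/-- `(X, Y)` is a cotorsion pair. -/
def IsCotorsionPair (X Y : Set 𝒜) : Prop := Y = rightPerp X ∧ X = leftPerp Y

/-- `(X, Y)` is a complete cotorsion pair: it is a cotorsion pair with enough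
projectives and enough injectives. -/
def IsCompleteCotorsionPair (X Y : Set 𝒜) : Prop :=
  IsCotorsionPair X Y ∧
  (∀ A : 𝒜, ∃ (Y' X' : 𝒜) (i : Y' ⟶ X') (p : X' ⟶ A) (w : i ≫ p = 0),
    (ShortComplex.mk i p w).ShortExact ∧ X' ∈ X ∧ Y' ∈ Y) ∧
  (∀ A : 𝒜, ∃ (Y' X' : 𝒜) (i : A ⟶ Y') (p : Y' ⟶ X') (w : i ≫ p = 0),
    (ShortComplex.mk i p w).ShortExact ∧ X' ∈ X ∧ Y' ∈ Y)

/-- A class is thick if it is closed under direct summands (retracts) and satisfies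
the two-out-of-three property on short exact sequences. -/
def IsThick (W : Set 𝒜) : Prop :=
  (∀ A B : 𝒜, (∃ (s : A ⟶ B) (r : B ⟶ A), s ≫ r = 𝟙 A) → B ∈ W → A ∈ W) ∧
  (∀ S : ShortComplex 𝒜, S.ShortExact →
    ((S.X₁ ∈ W → S.X₂ ∈ W → S.X₃ ∈ W) ∧ (S.X₁ ∈ W → S.X₃ ∈ W → S.X₂ ∈ W) ∧
      (S.X₂ ∈ W → S.X₃ ∈ W → S.X₁ ∈ W)))

/-- A projective cotorsion pair: a complete cotorsion pair `(C, W)` with `W` thick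
and `C ∩ W` exactly the class of projective objects. -/
def IsProjectiveCotorsionPair (C W : Set 𝒜) : Prop :=
  IsCompleteCotorsionPair C W ∧ IsThick W ∧ (C ∩ W = {P : 𝒜 | Projective P})

/-- The sphere complex `S^n(A)`: `A` concentrated in degree `n`. -/
noncomputable def sphere (n : ℤ) (A : 𝒜) : ChainComplex 𝒜 ℤ :=
  (HomologicalComplex.single 𝒜 (ComplexShape.down ℤ) n).obj A

/-- The disk complex `D^n(A)`: `A` in degrees `n` and `n-1` with identity differential. -/
noncomputable def disk (n : ℤ) (A : 𝒜) : ChainComplex 𝒜 ℤ where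
  X i := if i = n ∨ i = n - 1 then A else 0
  d i j :=
    if h : i = n ∧ j = n - 1 then
      eqToHom (by rw [if_pos (Or.inl h.1), if_pos (Or.inr h.2)])
    else 0
  shape i j hij := by
    apply dif_neg
    rintro ⟨rfl, rfl⟩
    exact hij (by simp only [ComplexShape.down_Rel]; omega)
  d_comp_d' i j k hij hjk := by
    by_cases h : i = n ∧ j = n - 1
    · rw [dif_neg (show ¬(j = n ∧ k = n - 1) by rintro ⟨rfl, -⟩; omega), comp_zero]
    · rw [dif_neg h, zero_comp]

end AbelianNotions






section AbelianNotionsB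
variable {𝒜 : Type u} [Category.{v} 𝒜] [Abelian 𝒜]

/-- The complex `𝔻` remains exact after applying the contravariant functor `Hom(-, L)`. -/
def HomIntoExact (𝔻 : ChainComplex 𝒜 ℤ) (L : 𝒜) : Prop :=
  ∀ (n : ℤ) (f : 𝔻.X n ⟶ L), 𝔻.d (n + 1) n ≫ f = 0 →
    ∃ g : 𝔻.X (n - 1) ⟶ L, f = 𝔻.d n (n - 1) ≫ g

/-- The complex `𝔻` remains exact after applying the covariant functor `Hom(A, -)`. -/
def HomFromExact (𝔻 : ChainComplex 𝒜 ℤ) (A : 𝒜) : Prop :=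
  ∀ (n : ℤ) (f : A ⟶ 𝔻.X n), f ≫ 𝔻.d n (n - 1) = 0 →
    ∃ g : A ⟶ 𝔻.X (n + 1), f = g ≫ 𝔻.d (n + 1) n

end AbelianNotionsB

abbrev Ch (R : Type) [Ring R] := ChainComplex (ModuleCat R) ℤ
abbrev DCh (R : Type) [Ring R] := ChainComplex (Ch R) ℤ

def IsTypeFPInfty {S : Type} [Ring S] (F : ModuleCat S) : Prop :=
  ∃ P : ProjectiveResolution F, ∀ n : ℕ, Module.Finite S (P.complex.X n)

/-- A module is countably generated if it has a countable generating set. -/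
def IsCountablyGenerated {S : Type} [Ring S] (M : ModuleCat S) : Prop :=
  ∃ s : Set M, s.Countable ∧ Submodule.span S s = ⊤

/-- A chain complex is countably generated iff each component is countably generated. -/
def IsCountablyGeneratedCx {S : Type} [Ring S] (X : ChainComplex (ModuleCat S) ℤ) : Prop :=
  ∀ n : ℤ, IsCountablyGenerated (X.X n)

/-- A module `M` has projective dimension at most `n` : it admits a projective
resolution vanishing above degree `n`. -/
def HasProjDimLE {S : Type} [Ring S] (M : ModuleCat S) (n : ℕ) : Prop :=
  ∃ P : ProjectiveResolution M, ∀ k : ℕ, n < k → IsZero (P.complex.X k)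

/-- A module is absolutely pure (FP-injective) if `Ext¹(F, E) = 0` for every finitely
presented module `F`. -/
def IsAbsolutelyPure {S : Type} [Ring S] (E : ModuleCat S) : Prop :=
  ∀ F : ModuleCat S, Module.FinitePresentation S F → Ext1IsZero F E

/-- A module is absolutely clean if `Ext¹(F, A) = 0` for every module `F` of type `FP_∞`. -/
def IsAbsolutelyClean {S : Type} [Ring S] (A : ModuleCat S) : Prop :=
  ∀ F : ModuleCat S, IsTypeFPInfty F → Ext1IsZero F A

/-- `M` has absolutely pure (FP-injective) dimension at most `n` : there is an exact
sequence `0 → M → E⁰ → ⋯ → Eⁿ → 0` with each `Eⁱ` absolutely pure. -/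
def HasAbsPureDimLE {S : Type} [Ring S] (M : ModuleCat S) (n : ℕ) : Prop :=
  ∃ D : CochainComplex (ModuleCat S) ℕ,
    Nonempty (D.X 0 ≅ M) ∧ (∀ i : ℕ, D.ExactAt i) ∧
      (∀ i : ℕ, 1 ≤ i → IsAbsolutelyPure (D.X i)) ∧ (∀ i : ℕ, n + 1 < i → IsZero (D.X i))

section Coherent
variable (R : Type) [Ring R]

/-- `R` is left coherent: every finitely generated left ideal is finitely presented. -/
def IsLeftCoherent : Prop :=
  ∀ I : Ideal R, I.FG → Module.FinitePresentation R I

/-- `R` is right coherent: every finitely generated right ideal is finitely presented. -/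
def IsRightCoherent : Prop :=
  ∀ I : Submodule Rᵐᵒᵖ R, I.FG → Module.FinitePresentation Rᵐᵒᵖ I

/-- A Ding-Chen ring: a two-sided coherent ring with finite self-FP-injective dimension
on both sides. -/
def IsDingChen : Prop :=
  IsLeftCoherent R ∧ IsRightCoherent R ∧
    (∃ n : ℕ, HasAbsPureDimLE (ModuleCat.of R R) n) ∧
    ∃ n : ℕ, HasAbsPureDimLE (ModuleCat.of Rᵐᵒᵖ Rᵐᵒᵖ) n

end Coherent

section Modules
variable {R : Type} [Ring R]

open TensorProduct in
noncomputable def ncRel (R : Type) [Ring R] (M : Type) [AddCommGroup M] [Module Rᵐᵒᵖ M]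
    (N : Type) [AddCommGroup N] [Module R N] : AddSubgroup (TensorProduct ℤ M N) :=
  AddSubgroup.closure
    {z | ∃ (r : R) (m : M) (n : N),
      z = (MulOpposite.op r • m) ⊗ₜ[ℤ] n - m ⊗ₜ[ℤ] (r • n)}

def IsLevel (L : ModuleCat R) : Prop :=
  ∀ (K P F : ModuleCat Rᵐᵒᵖ) (i : K ⟶ P) (p : P ⟶ F) (w : i ≫ p = 0),
    (ShortComplex.mk i p w).ShortExact → Projective P → IsTypeFPInfty F →
    ∀ z : TensorProduct ℤ K L,
      TensorProduct.map i.hom.toAddMonoidHom.toIntLinearMap (LinearMap.id (R := ℤ) (M := L)) z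
        ∈ ncRel R P L → z ∈ ncRel R K L

/-- A module `L` is flat if for every monomorphism `K → P` of right modules, the
induced map `K ⊗_R L → P ⊗_R L` is injective. -/
def IsFlat (L : ModuleCat R) : Prop :=
  ∀ (K P : ModuleCat Rᵐᵒᵖ) (i : K ⟶ P), Mono i →
    ∀ z : TensorProduct ℤ K L,
      TensorProduct.map i.hom.toAddMonoidHom.toIntLinearMap (LinearMap.id (R := ℤ) (M := L)) z
        ∈ ncRel R P L → z ∈ ncRel R K L

/-- `M` has flat dimension at most `n` : there is an exact sequence
`0 → Fₙ → ⋯ → F₀ → M → 0` with each `Fᵢ` flat. -/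
def HasFlatDimLE (M : ModuleCat R) (n : ℕ) : Prop :=
  ∃ D : ChainComplex (ModuleCat R) ℕ,
    Nonempty (D.X 0 ≅ M) ∧ (∀ i : ℕ, D.ExactAt i) ∧
      (∀ i : ℕ, 1 ≤ i → IsFlat (D.X i)) ∧ (∀ i : ℕ, n + 1 < i → IsZero (D.X i))

/-- A Gorenstein projective module: a cycle of an exact complex of projective modules
which remains exact under `Hom(-, Q)` for every projective module `Q`. -/
noncomputable def IsGorProjMod (M : ModuleCat R) : Prop :=
  ∃ D : ChainComplex (ModuleCat R) ℤ,
    (∀ n : ℤ, Projective (D.X n)) ∧ (∀ n : ℤ, D.ExactAt n) ∧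
      (∀ Q : ModuleCat R, Projective Q → HomIntoExact D Q) ∧
      Nonempty (M ≅ kernel (D.d 0 (-1)))

/-- A Gorenstein injective module: a cycle of an exact complex of injective modules
which remains exact under `Hom(E, -)` for every injective module `E`. -/
noncomputable def IsGorInjMod (M : ModuleCat R) : Prop :=
  ∃ D : ChainComplex (ModuleCat R) ℤ,
    (∀ n : ℤ, Injective (D.X n)) ∧ (∀ n : ℤ, D.ExactAt n) ∧
      (∀ E : ModuleCat R, Injective E → HomFromExact D E) ∧
      Nonempty (M ≅ kernel (D.d 0 (-1)))

end Modules

section Complexes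
variable {R : Type} [Ring R]

def IsLevelComplex (L : Ch R) : Prop :=
  (∀ n : ℤ, L.ExactAt n) ∧ ∀ n : ℤ, IsLevel (L.cycles n)

/-- A flat chain complex: exact with all cycle modules flat. -/
def IsFlatComplex (F : Ch R) : Prop :=
  (∀ n : ℤ, F.ExactAt n) ∧ ∀ n : ℤ, IsFlat (F.cycles n)

/-- An absolutely clean chain complex: exact with all cycle modules absolutely clean. -/
def IsAbsCleanComplex (A : Ch R) : Prop :=
  (∀ n : ℤ, A.ExactAt n) ∧ ∀ n : ℤ, IsAbsolutelyClean (A.cycles n)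

def IsACAcyclicProjCx (𝔻 : DCh R) : Prop :=
  (∀ n : ℤ, Projective (𝔻.X n)) ∧ (∀ n : ℤ, 𝔻.ExactAt n) ∧
    ∀ L : Ch R, IsLevelComplex L → HomIntoExact 𝔻 L

noncomputable def IsGorACProj (X : Ch R) : Prop :=
  ∃ 𝔻 : DCh R, IsACAcyclicProjCx 𝔻 ∧ Nonempty (X ≅ kernel (𝔻.d 0 (-1)))

/-- A Ding projective chain complex. -/
noncomputable def IsDingProjCx (X : Ch R) : Prop :=
  ∃ 𝔻 : DCh R,
    (∀ n : ℤ, Projective (𝔻.X n)) ∧ (∀ n : ℤ, 𝔻.ExactAt n) ∧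
      (∀ F : Ch R, IsFlatComplex F → HomIntoExact 𝔻 F) ∧
      Nonempty (X ≅ kernel (𝔻.d 0 (-1)))

/-- A Gorenstein projective chain complex. -/
noncomputable def IsGorProjCx (X : Ch R) : Prop :=
  ∃ 𝔻 : DCh R,
    (∀ n : ℤ, Projective (𝔻.X n)) ∧ (∀ n : ℤ, 𝔻.ExactAt n) ∧
      (∀ Q : Ch R, Projective Q → HomIntoExact 𝔻 Q) ∧
      Nonempty (X ≅ kernel (𝔻.d 0 (-1)))

/-- A Gorenstein AC-injective chain complex. -/
noncomputable def IsGorACInj (X : Ch R) : Prop :=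
  ∃ 𝕀 : DCh R,
    (∀ n : ℤ, Injective (𝕀.X n)) ∧ (∀ n : ℤ, 𝕀.ExactAt n) ∧
      (∀ A : Ch R, IsAbsCleanComplex A → HomFromExact 𝕀 A) ∧
      Nonempty (X ≅ kernel (𝕀.d 0 (-1)))

/-- A Gorenstein injective chain complex. -/
noncomputable def IsGorInjCx (X : Ch R) : Prop :=
  ∃ 𝕀 : DCh R,
    (∀ n : ℤ, Injective (𝕀.X n)) ∧ (∀ n : ℤ, 𝕀.ExactAt n) ∧
      (∀ E : Ch R, Injective E → HomFromExact 𝕀 E) ∧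
      Nonempty (X ≅ kernel (𝕀.d 0 (-1)))

def chCard (X : Ch R) : Cardinal := Cardinal.mk (Σ n : ℤ, X.X n)

def dchCard (𝕏 : DCh R) : Cardinal := Cardinal.mk (Σ (n : ℤ) (k : ℤ), (𝕏.X n).X k)

end Complexes






variable {R : Type} [Ring R]

lemma mc_comp_apply {A B C : ModuleCat R} (f : A ⟶ B) (g : B ⟶ C) (x : A) :
    (f ≫ g) x = g (f x) := rfl

lemma mc_zero_apply {A B : ModuleCat R} (x : A) : (0 : A ⟶ B) x = 0 := rfl

/-- A subcomplex of a chain complex of modules: a family of submodules preserved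
by the differentials. -/
structure SubCx (X : Ch R) where
  N : ∀ n : ℤ, Submodule R (X.X n)
  d_mem : ∀ (i j : ℤ), ∀ x ∈ N i, X.d i j x ∈ N j

instance (X : Ch R) : LE (SubCx X) := ⟨fun Q Q' => ∀ n, Q.N n ≤ Q'.N n⟩

/-- A subcomplex, regarded as a chain complex in its own right. -/
noncomputable def SubCx.toCh {X : Ch R} (Q : SubCx X) : Ch R where
  X n := ModuleCat.of R (Q.N n)
  d i j := ModuleCat.ofHom ((X.d i j).hom.restrict (Q.d_mem i j))
  shape i j h := by
    refine ModuleCat.hom_ext (LinearMap.ext fun x => Subtype.ext ?_)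
    have h0 : X.d i j = 0 := X.shape i j h
    show X.d i j x.1 = _
    rw [h0]
    rfl
  d_comp_d' i j k _ _ := by
    refine ModuleCat.hom_ext (LinearMap.ext fun x => Subtype.ext ?_)
    have h0 : X.d j k (X.d i j x.1) = 0 := by
      rw [← mc_comp_apply, X.d_comp_d i j k, mc_zero_apply]
    exact h0

/-- The inclusion of a smaller subcomplex into a larger one. -/
noncomputable def SubCx.incl {X : Ch R} {Q Q' : SubCx X} (h : Q ≤ Q') :
    Q.toCh ⟶ Q'.toCh where
  f n := ModuleCat.ofHom (Submodule.inclusion (h n))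
  comm' i j _ := by
    refine ModuleCat.hom_ext (LinearMap.ext fun x => Subtype.ext ?_)
    rfl

/-- `M` is a transfinite extension (continuous union) of complexes from `S`. -/
noncomputable def IsTransfiniteExtension (S : Set (Ch R)) (M : Ch R) : Prop :=
  ∃ (lam : Ordinal.{0}) (Q : ∀ α : Ordinal, α ≤ lam → SubCx M)
    (mono : ∀ (α α' : Ordinal.{0}) (h : α ≤ α') (h' : α' ≤ lam), Q α (h.trans h') ≤ Q α' h'),
    ((Q 0 zero_le).toCh ∈ S) ∧
    (∀ (α : Ordinal.{0}) (h : α < lam),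
      cokernel (SubCx.incl (mono α (Order.succ α) (Order.le_succ α) (Order.succ_le_of_lt h)))
        ∈ S) ∧
    (∀ (γ : Ordinal.{0}) (h : γ ≤ lam), Order.IsSuccLimit γ →
      ∀ n : ℤ, (Q γ h).N n = ⨆ (α : Ordinal.{0}) (hα : α < γ), (Q α (hα.le.trans h)).N n) ∧
    (∀ n : ℤ, (Q lam le_rfl).N n = ⊤)






variable {R : Type} [Ring R]


/-- A sub-double-complex of a double complex `𝕏`: a family of submodules preserved by
the inner and outer differentials. -/
structure SubDCx (𝕏 : DCh R) where
  N : ∀ (n k : ℤ), Submodule R ((𝕏.X n).X k)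
  d_inner_mem : ∀ (n i j : ℤ), ∀ x ∈ N n i, (𝕏.X n).d i j x ∈ N n j
  d_outer_mem : ∀ (i j k : ℤ), ∀ x ∈ N i k, (𝕏.d i j).f k x ∈ N j k

instance (𝕏 : DCh R) : LE (SubDCx 𝕏) := ⟨fun Q Q' => ∀ n k, Q.N n k ≤ Q'.N n k⟩

/-- Row `n` of a sub-double-complex, as a chain complex. -/
noncomputable def SubDCx.row {𝕏 : DCh R} (Q : SubDCx 𝕏) (n : ℤ) : Ch R where
  X k := ModuleCat.of R (Q.N n k)
  d i j := ModuleCat.ofHom (((𝕏.X n).d i j).hom.restrict (Q.d_inner_mem n i j))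
  shape i j h := by
    refine ModuleCat.hom_ext (LinearMap.ext fun x => Subtype.ext ?_)
    show (𝕏.X n).d i j x.1 = _
    rw [(𝕏.X n).shape i j h]
    rfl
  d_comp_d' i j k _ _ := by
    refine ModuleCat.hom_ext (LinearMap.ext fun x => Subtype.ext ?_)
    have h0 : (𝕏.X n).d j k ((𝕏.X n).d i j x.1) = 0 := by
      rw [← mc_comp_apply, (𝕏.X n).d_comp_d i j k, mc_zero_apply]
    exact h0

/-- A sub-double-complex, regarded as a double complex in its own right. -/
noncomputable def SubDCx.toDCh {𝕏 : DCh R} (Q : SubDCx 𝕏) : DCh R where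
  X n := Q.row n
  d i j :=
    { f := fun k => ModuleCat.ofHom (((𝕏.d i j).f k).hom.restrict (Q.d_outer_mem i j k))
      comm' := fun a b _ => by
        refine ModuleCat.hom_ext (LinearMap.ext fun x => Subtype.ext ?_)
        have h0 := LinearMap.congr_fun (ModuleCat.hom_ext_iff.mp ((𝕏.d i j).comm a b)) x.1
        exact h0 }
  shape i j h := by
    have h0 : 𝕏.d i j = 0 := 𝕏.shape i j h
    refine HomologicalComplex.hom_ext _ _ fun k => ModuleCat.hom_ext (LinearMap.ext fun x => Subtype.ext ?_)
    show (𝕏.d i j).f k x.1 = _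
    rw [h0]
    rfl
  d_comp_d' i j k _ _ := by
    refine HomologicalComplex.hom_ext _ _ fun m => ModuleCat.hom_ext (LinearMap.ext fun x => Subtype.ext ?_)
    have h0 : (𝕏.d j k).f m ((𝕏.d i j).f m x.1) = 0 := by
      have hdd := 𝕏.d_comp_d i j k
      calc (𝕏.d j k).f m ((𝕏.d i j).f m x.1) = ((𝕏.d i j ≫ 𝕏.d j k).f m) x.1 := rfl
        _ = ((0 : 𝕏.X i ⟶ 𝕏.X k).f m) x.1 := by rw [hdd]
        _ = 0 := rfl
    exact h0


variable {R : Type} [Ring R]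

/-- The inclusion of a smaller sub-double-complex into a larger one. -/
noncomputable def SubDCx.incl {𝕏 : DCh R} {Q Q' : SubDCx 𝕏} (h : Q ≤ Q') :
    Q.toDCh ⟶ Q'.toDCh where
  f n :=
    { f := fun k => ModuleCat.ofHom (Submodule.inclusion (h n k))
      comm' := fun i j _ => ModuleCat.hom_ext (LinearMap.ext fun x => Subtype.ext rfl) }
  comm' := fun i j _ =>
    HomologicalComplex.hom_ext _ _ fun k => ModuleCat.hom_ext (LinearMap.ext fun x => Subtype.ext rfl)






section HomCx
variable {𝒜 : Type u} [Category.{v} 𝒜] [Abelian 𝒜]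

/-- The degree-`n` part of the Hom-complex `Hom(X, Y)`:
families of maps `X_p ⟶ Y_{p+n}`. -/
abbrev HChain (X Y : ChainComplex 𝒜 ℤ) (n : ℤ) :=
  ∀ p : ℤ, X.X p ⟶ Y.X (p + n)

/-- The differential of the Hom-complex, `(δ f)_p = d_{p+m} ∘ f_p - (-1)^m f_{p-1} ∘ d_p`. -/
noncomputable def hδ (X Y : ChainComplex 𝒜 ℤ) (m n : ℤ) : HChain X Y m →+ HChain X Y n :=
  AddMonoidHom.mk'
    (fun f p =>
      f p ≫ Y.d (p + m) (p + n) -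
        (m.negOnePow : ℤ) •
          (X.d p (p + n - m) ≫ f (p + n - m) ≫ eqToHom (congrArg Y.X (by omega))))
    (by
      intro f g
      funext p
      simp only [Pi.add_apply, Preadditive.add_comp, Preadditive.comp_add, smul_add]
      abel)

/-- The `n`-th homology of the Hom-complex `Hom(X,Y)`, presented as
(cycles)/(boundaries). -/
noncomputable def homCxHomology (X Y : ChainComplex 𝒜 ℤ) (n : ℤ) : Type v :=
  (hδ X Y n (n - 1)).ker ⧸
    ((hδ X Y (n + 1) n).range.comap (hδ X Y n (n - 1)).ker.subtype)

noncomputable instance (X Y : ChainComplex 𝒜 ℤ) (n : ℤ) : AddCommGroup (homCxHomology X Y n) := by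
  unfold homCxHomology; infer_instance

/-- The suspension `Σⁿ Y`, with `(Σⁿ Y)_k = Y_{k-n}` and differential `(-1)ⁿ d`. -/
noncomputable def shiftC (n : ℤ) (Y : ChainComplex 𝒜 ℤ) : ChainComplex 𝒜 ℤ where
  X k := Y.X (k - n)
  d i j := (n.negOnePow : ℤ) • Y.d (i - n) (j - n)
  shape i j h := by
    rw [Y.shape, smul_zero]
    simp only [ComplexShape.down_Rel] at h ⊢
    omega
  d_comp_d' i j k _ _ := by
    rw [Preadditive.zsmul_comp, Preadditive.comp_zsmul, Y.d_comp_d, smul_zero, smul_zero]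

/-- The group of chain homotopy classes of chain maps, i.e. hom-groups in the
homotopy category `K(𝒜)`. -/
noncomputable def htpyClasses (Z W : ChainComplex 𝒜 ℤ) : Type v :=
  (HomotopyCategory.quotient 𝒜 (ComplexShape.down ℤ)).obj Z ⟶
    (HomotopyCategory.quotient 𝒜 (ComplexShape.down ℤ)).obj W

noncomputable instance (Z W : ChainComplex 𝒜 ℤ) : AddCommGroup (htpyClasses Z W) := by
  unfold htpyClasses; infer_instance

/-- A degreewise split extension of `X` by `Y`. -/
structure DWExtension (X Y : ChainComplex 𝒜 ℤ) where
  Z : ChainComplex 𝒜 ℤ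
  i : Y ⟶ Z
  p : Z ⟶ X
  w : i ≫ p = 0
  shortExact : (ShortComplex.mk i p w).ShortExact
  dwSplit : ∀ k : ℤ, ∃ r : Z.X k ⟶ Y.X k, i.f k ≫ r = 𝟙 (Y.X k)

/-- Equivalence of extensions (the Yoneda equivalence relation on `Ext¹`). -/
def DWExtension.equivRel {X Y : ChainComplex 𝒜 ℤ} (E E' : DWExtension X Y) : Prop :=
  ∃ φ : E.Z ≅ E'.Z, E.i ≫ φ.hom = E'.i ∧ φ.hom ≫ E'.p = E.p

instance dwSetoid (X Y : ChainComplex 𝒜 ℤ) : Setoid (DWExtension X Y) where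
  r := DWExtension.equivRel
  iseqv := by
    constructor
    · intro E
      exact ⟨Iso.refl _, by simp, by simp⟩
    · rintro E E' ⟨φ, h1, h2⟩
      refine ⟨φ.symm, ?_, ?_⟩
      · rw [← h1]; simp
      · rw [← h2]; simp
    · rintro E E' E'' ⟨φ, h1, h2⟩ ⟨ψ, h3, h4⟩
      refine ⟨φ ≪≫ ψ, ?_, ?_⟩
      · simp [reassoc_of% h1, h3]
      · simp [h4, h2]

/-- The pointed set of equivalence classes of degreewise split extensions of `X` by `Y`;
this is `Ext¹_dw(X, Y)`. -/
def DWExtClasses (X Y : ChainComplex 𝒜 ℤ) : Type (max u v) :=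
  Quotient (dwSetoid X Y)


end HomCx

/-!
A cycle `Z` of an exact complex of projectives `𝔻` is presented by `0 → Z' → 𝔻ₙ → Z → 0`, where
`Z'` is the cycle one degree up, so `Ext¹(Z, Y) = 0` iff every map `Z' → Y` extends over `𝔻ₙ`; this makes
`Ext¹(Z, Y) = 0` for all cycles `Z` equivalent to exactness of `Hom(𝔻, Y)`. The cycles of the
complexes `𝔻` that define Gorenstein AC-projectivity are again Gorenstein AC-projective, so `GP^⊥`
is the class of `Y` such that `Hom(𝔻, Y)` is exact for all such `𝔻`. Since each `𝔻ₙ` is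
projective, `Hom(𝔻, -)` turns short exact sequences into short exact sequences of complexes, and
the two-out-of-three property is a diagram chase in the resulting long exact sequence. A projective
complex is a retract of a sum of disks on free modules, which is a level complex because free
modules are flat.
-/

section Abelian
variable {𝒜 : Type u} [Category.{v} 𝒜] [Abelian 𝒜]

lemma shortExact_pushout_inr {S : ShortComplex 𝒜} (hS : S.ShortExact) {Y : 𝒜} (f : S.X₁ ⟶ Y) :
    (ShortComplex.mk (pushout.inr S.f f) (pushout.desc S.g 0 (by simp))
      (pushout.inr_desc _ _ _)).ShortExact := by
  have := hS.mono_f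
  have := hS.epi_g
  have hinl := pushout.inl_desc (f := S.f) (g := f) S.g 0 (by simp)
  refine { exact := ?_, mono_f := inferInstance, epi_g := epi_of_epi_fac hinl }
  rw [ShortComplex.exact_iff_exact_up_to_refinements]
  intro A x hx
  obtain ⟨A₁, π₁, _, x₂, y, hπ₁⟩ :=
    (IsPushout.of_hasPushout S.f f).hom_eq_add_up_to_refinements x
  have hx₂ : x₂ ≫ S.g = 0 := by
    have := hπ₁.symm =≫ pushout.desc S.g 0 (by simp)
    rwa [Preadditive.add_comp, Category.assoc, Category.assoc, hinl, pushout.inr_desc, comp_zero,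
      add_zero, Category.assoc, hx, comp_zero] at this
  obtain ⟨A₂, π₂, _, x₁, hπ₂⟩ := hS.exact.exact_up_to_refinements x₂ hx₂
  refine ⟨A₂, π₂ ≫ π₁, inferInstance, x₁ ≫ f + π₂ ≫ y, ?_⟩
  simp [hπ₁, reassoc_of% hπ₂, pushout.condition]

lemma Ext1IsZero.exists_extension {S : ShortComplex 𝒜} (hS : S.ShortExact) {Y : 𝒜}
    (h : Ext1IsZero S.X₃ Y) (f : S.X₁ ⟶ Y) : ∃ g : S.X₂ ⟶ Y, S.f ≫ g = f := by
  have hT := shortExact_pushout_inr hS f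
  obtain ⟨s, hs⟩ := h _ _ _ _ hT
  let σ := ShortComplex.Splitting.ofExactOfSection _ hT.exact s hs hT.mono_f
  refine ⟨pushout.inl S.f f ≫ σ.r, ?_⟩
  have hr : pushout.inr S.f f ≫ σ.r = 𝟙 Y := σ.f_r
  rw [pushout.condition_assoc, hr, Category.comp_id]

lemma ext1IsZero_of_forall_extension {S : ShortComplex 𝒜} (hS : S.ShortExact)
    [Projective S.X₂] {Y : 𝒜} (h : ∀ f : S.X₁ ⟶ Y, ∃ g : S.X₂ ⟶ Y, S.f ≫ g = f) :
    Ext1IsZero S.X₃ Y := by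
  intro Z i p w hT
  have := hS.epi_g
  have := hT.mono_f
  have := hT.epi_g
  obtain ⟨t, ht⟩ : ∃ t : S.X₂ ⟶ Z, t ≫ p = S.g := ⟨_, Projective.factorThru_comp S.g p⟩
  obtain ⟨g, hg⟩ := h (hT.exact.lift (S.f ≫ t) (by simp [ht]))
  have hdesc : S.f ≫ (t - g ≫ i) = 0 := by
    rw [Preadditive.comp_sub, ← Category.assoc, hg, ShortComplex.Exact.lift_f, sub_self]
  refine ⟨hS.exact.desc (t - g ≫ i) hdesc, ?_⟩
  rw [← cancel_epi S.g, ShortComplex.Exact.g_desc_assoc]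
  simp [ht, w]

lemma ext1IsZero_iff_forall_extension {S : ShortComplex 𝒜} (hS : S.ShortExact)
    [Projective S.X₂] {Y : 𝒜} :
    Ext1IsZero S.X₃ Y ↔ ∀ f : S.X₁ ⟶ Y, ∃ g : S.X₂ ⟶ Y, S.f ≫ g = f :=
  ⟨fun h => h.exists_extension hS, ext1IsZero_of_forall_extension hS⟩

lemma Ext1IsZero.of_iso {X X' Y : 𝒜} (e : X ≅ X') (h : Ext1IsZero X Y) : Ext1IsZero X' Y := by
  intro Z i p w hT
  have hT' : (ShortComplex.mk i (p ≫ e.inv) (by simp [reassoc_of% w])).ShortExact :=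
    ShortComplex.shortExact_of_iso
      (ShortComplex.isoMk (Iso.refl Y) (Iso.refl Z) e.symm (by simp) (by simp)) hT
  obtain ⟨s, hs⟩ := h Z i _ _ hT'
  have hs' : s ≫ p = e.hom := by simpa using hs =≫ e.hom
  exact ⟨e.inv ≫ s, by simp [hs']⟩

variable {𝔻 : ChainComplex 𝒜 ℤ} {Y : 𝒜}

lemma HomIntoExact.exists_eq_d_comp (h : HomIntoExact 𝔻 Y) {i j k : ℤ} (hi : j + 1 = i)
    (hk : k + 1 = j) (f : 𝔻.X j ⟶ Y) (hf : 𝔻.d i j ≫ f = 0) :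
    ∃ g : 𝔻.X k ⟶ Y, f = 𝔻.d j k ≫ g := by
  obtain rfl := hi
  obtain rfl : k = j - 1 := by omega
  exact h j f hf

noncomputable abbrev kernelShortComplex (𝔻 : ChainComplex 𝒜 ℤ) (i j k : ℤ) : ShortComplex 𝒜 :=
  ShortComplex.mk (kernel.ι (𝔻.d i j)) (kernel.lift (𝔻.d j k) (𝔻.d i j) (𝔻.d_comp_d i j k))
    (by ext; simp)

lemma epi_kernelLift_d {i j k : ℤ} (h : 𝔻.ExactAt j) (hi : j + 1 = i) (hk : k + 1 = j) :
    Epi (kernel.lift (𝔻.d j k) (𝔻.d i j) (𝔻.d_comp_d i j k)) :=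
  ((𝔻.exactAt_iff' i j k ((ChainComplex.prev ℤ j).trans hi)
    ((ChainComplex.next ℤ j).trans (by omega))).1 h).epi_kernelLift

lemma kernelShortComplex_shortExact {i j k : ℤ} (h : 𝔻.ExactAt j) (hi : j + 1 = i)
    (hk : k + 1 = j) :
    (kernelShortComplex 𝔻 i j k).ShortExact where
  exact := ShortComplex.exact_of_f_is_kernel _ <|
    KernelFork.IsLimit.ofι _ _
      (fun x hx => kernel.lift _ x (by simpa using hx =≫ kernel.ι (𝔻.d j k)))
      (fun _ _ => kernel.lift_ι _ _ _)
      (fun _ _ _ hm => by ext; simpa using hm)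
  mono_f := inferInstance
  epi_g := epi_kernelLift_d h hi hk

lemma homIntoExact_iff_forall_extension (h𝔻 : ∀ n, 𝔻.ExactAt n) :
    HomIntoExact 𝔻 Y ↔ ∀ i j, j + 1 = i → ∀ f : kernel (𝔻.d i j) ⟶ Y,
      ∃ g : 𝔻.X i ⟶ Y, kernel.ι (𝔻.d i j) ≫ g = f := by
  constructor
  · intro h i j hij f
    have := epi_kernelLift_d (h𝔻 i) (i := i + 1) rfl hij
    set p := kernel.lift (𝔻.d i j) (𝔻.d (i + 1) i) (𝔻.d_comp_d _ _ _)
    have hp : 𝔻.d (i + 1 + 1) (i + 1) ≫ p = 0 := by ext; simp [p]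
    obtain ⟨g, hg⟩ := h.exists_eq_d_comp (i := i + 1 + 1) rfl rfl (p ≫ f)
      (by rw [← Category.assoc, hp, zero_comp])
    exact ⟨g, by rw [← cancel_epi p, hg, kernel.lift_ι_assoc]⟩
  · intro h n f hf
    have hS := kernelShortComplex_shortExact (h𝔻 (n - 1)) (i := n) (k := n - 1 - 1) (by ring)
      (by ring)
    have := hS.epi_g
    have := epi_kernelLift_d (h𝔻 n) (i := n + 1) (k := n - 1) rfl (by ring)
    have hι : kernel.ι (𝔻.d n (n - 1)) ≫ f = 0 := by
      rw [← cancel_epi (kernel.lift (𝔻.d n (n - 1)) (𝔻.d (n + 1) n) (𝔻.d_comp_d _ _ _)),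
        kernel.lift_ι_assoc, hf, comp_zero]
    obtain ⟨g, hg⟩ := h (n - 1) (n - 1 - 1) (by ring) (hS.exact.desc f hι)
    refine ⟨g, ?_⟩
    rw [← kernel.lift_ι (𝔻.d (n - 1) (n - 1 - 1)) (𝔻.d n (n - 1)) (𝔻.d_comp_d _ _ _),
      Category.assoc, hg]
    exact (hS.exact.g_desc f hι).symm

lemma homIntoExact_iff_ext1IsZero (h𝔻 : ∀ n, 𝔻.ExactAt n) (hproj : ∀ n, Projective (𝔻.X n)) :
    HomIntoExact 𝔻 Y ↔ ∀ i j, j + 1 = i → Ext1IsZero (kernel (𝔻.d i j)) Y := by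
  have key : ∀ i j k, j + 1 = i → k + 1 = j → (Ext1IsZero (kernel (𝔻.d j k)) Y ↔
      ∀ f : kernel (𝔻.d i j) ⟶ Y, ∃ g : 𝔻.X i ⟶ Y, kernel.ι (𝔻.d i j) ≫ g = f) :=
    fun i j k hi hk =>
      have := hproj i
      ext1IsZero_iff_forall_extension (kernelShortComplex_shortExact (h𝔻 j) hi hk)
  rw [homIntoExact_iff_forall_extension h𝔻]
  constructor
  · exact fun h j k hk => (key (j + 1) j k rfl hk).2 (h _ _ rfl)
  · exact fun h i j hij => (key i j (j - 1) hij (by ring)).1 (h _ _ (by ring))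

lemma HomIntoExact.of_retract {Y' : 𝒜} (h : HomIntoExact 𝔻 Y') (s : Y ⟶ Y') (r : Y' ⟶ Y)
    (hsr : s ≫ r = 𝟙 Y) : HomIntoExact 𝔻 Y := by
  intro n f hf
  obtain ⟨g, hg⟩ := h n (f ≫ s) (by rw [← Category.assoc, hf, zero_comp])
  exact ⟨g ≫ r, by rw [← Category.assoc, ← hg, Category.assoc, hsr, Category.comp_id]⟩

variable {S : ShortComplex 𝒜}

lemma homIntoExact_X₂ (hproj : ∀ n, Projective (𝔻.X n)) (hS : S.ShortExact)
    (h₁ : HomIntoExact 𝔻 S.X₁) (h₃ : HomIntoExact 𝔻 S.X₃) :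
    HomIntoExact 𝔻 S.X₂ := by
  intro n f hf
  have := hS.mono_f
  have := hS.epi_g
  have := hproj (n - 1)
  obtain ⟨g₃, hg₃⟩ := h₃ n (f ≫ S.g) (by rw [← Category.assoc, hf, zero_comp])
  obtain ⟨g, hg⟩ : ∃ g, g ≫ S.g = g₃ := ⟨_, Projective.factorThru_comp g₃ S.g⟩
  have hu : (f - 𝔻.d n (n - 1) ≫ g) ≫ S.g = 0 := by simp [hg, hg₃]
  obtain ⟨v, hv⟩ := h₁ n (hS.exact.lift _ hu) (by
    rw [← cancel_mono S.f]; simp [hf])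
  refine ⟨g + v ≫ S.f, ?_⟩
  rw [Preadditive.comp_add, ← Category.assoc, ← hv, ShortComplex.Exact.lift_f]
  abel

lemma homIntoExact_X₃ (hproj : ∀ n, Projective (𝔻.X n)) (hS : S.ShortExact)
    (h₁ : HomIntoExact 𝔻 S.X₁) (h₂ : HomIntoExact 𝔻 S.X₂) :
    HomIntoExact 𝔻 S.X₃ := by
  intro n f hf
  have := hS.mono_f
  have := hS.epi_g
  have := hproj n
  obtain ⟨f', hf'⟩ : ∃ f', f' ≫ S.g = f := ⟨_, Projective.factorThru_comp f S.g⟩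
  have hw : (𝔻.d (n + 1) n ≫ f') ≫ S.g = 0 := by rw [Category.assoc, hf', hf]
  obtain ⟨v, hv⟩ := h₁.exists_eq_d_comp (i := n + 2) (by ring) rfl (hS.exact.lift _ hw) (by
    rw [← cancel_mono S.f]; simp)
  obtain ⟨g, hg⟩ := h₂ n (f' - v ≫ S.f) (by
    rw [Preadditive.comp_sub, ← Category.assoc, ← hv, ShortComplex.Exact.lift_f, sub_self])
  exact ⟨g ≫ S.g, by rw [← Category.assoc, ← hg]; simp [hf']⟩

lemma homIntoExact_X₁ (hproj : ∀ n, Projective (𝔻.X n)) (hS : S.ShortExact)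
    (h₂ : HomIntoExact 𝔻 S.X₂) (h₃ : HomIntoExact 𝔻 S.X₃) :
    HomIntoExact 𝔻 S.X₁ := by
  intro n f hf
  have := hS.mono_f
  have := hS.epi_g
  have := hproj (n - 1 - 1)
  obtain ⟨g, hg⟩ := h₂ n (f ≫ S.f) (by rw [← Category.assoc, hf, zero_comp])
  obtain ⟨g₃, hg₃⟩ := h₃.exists_eq_d_comp (k := n - 1 - 1) (by ring) (by ring) (g ≫ S.g) (by
    rw [← Category.assoc, ← hg]; simp)
  obtain ⟨g', hg'⟩ : ∃ g', g' ≫ S.g = g₃ := ⟨_, Projective.factorThru_comp g₃ S.g⟩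
  have hu : (g - 𝔻.d (n - 1) (n - 1 - 1) ≫ g') ≫ S.g = 0 := by simp [hg', hg₃]
  refine ⟨hS.exact.lift _ hu, ?_⟩
  rw [← cancel_mono S.f, hg]
  simp

/-- Re-indexing by `m`, without the sign that the shift functor puts on the differential. -/
noncomputable def translate (m : ℤ) (𝔻 : ChainComplex 𝒜 ℤ) : ChainComplex 𝒜 ℤ where
  X n := 𝔻.X (n + m)
  d i j := 𝔻.d (i + m) (j + m)
  shape i j h := 𝔻.shape _ _ (by simp only [ComplexShape.down_Rel] at h ⊢; omega)
  d_comp_d' _ _ _ _ _ := 𝔻.d_comp_d _ _ _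

lemma exactAt_translate (m n : ℤ) (h : 𝔻.ExactAt (n + m)) : (translate m 𝔻).ExactAt n := by
  rw [HomologicalComplex.exactAt_iff' _ (n + 1) n (n - 1) (ChainComplex.prev ℤ n)
    (ChainComplex.next ℤ n)]
  exact (𝔻.exactAt_iff' (n + 1 + m) (n + m) (n - 1 + m) ((ChainComplex.prev ℤ _).trans (by ring))
    ((ChainComplex.next ℤ _).trans (by ring))).1 h

lemma HomIntoExact.translate (h : HomIntoExact 𝔻 Y) (m : ℤ) :
    HomIntoExact (translate m 𝔻) Y :=
  fun _ f hf => h.exists_eq_d_comp (by ring) (by ring) f hf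

end Abelian

lemma IsACAcyclicProjCx.translate {𝔻 : DCh R} (h : IsACAcyclicProjCx 𝔻) (m : ℤ) :
    IsACAcyclicProjCx (translate m 𝔻) :=
  ⟨fun n => h.1 (n + m), fun n => exactAt_translate m n (h.2.1 (n + m)),
    fun L hL => (h.2.2 L hL).translate m⟩

lemma isGorACProj_kernel {𝔻 : DCh R} (h : IsACAcyclicProjCx 𝔻) {i j : ℤ} (hij : j + 1 = i) :
    IsGorACProj (kernel (𝔻.d i j)) := by
  obtain rfl : j = -1 + i := by omega
  refine ⟨translate i 𝔻, h.translate i, ⟨eqToIso ?_⟩⟩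
  change kernel (𝔻.d i (-1 + i)) = kernel (𝔻.d (0 + i) (-1 + i))
  rw [zero_add]

lemma mem_rightPerp_isGorACProj_iff {Y : Ch R} :
    Y ∈ rightPerp {X : Ch R | IsGorACProj X} ↔
      ∀ 𝔻 : DCh R, IsACAcyclicProjCx 𝔻 → HomIntoExact 𝔻 Y := by
  constructor
  · intro hY 𝔻 h𝔻
    rw [homIntoExact_iff_ext1IsZero h𝔻.2.1 h𝔻.1]
    exact fun i j hij => hY _ (isGorACProj_kernel h𝔻 hij)
  · rintro hY X ⟨𝔻, h𝔻, ⟨e⟩⟩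
    exact ((homIntoExact_iff_ext1IsZero h𝔻.2.1 h𝔻.1).1 (hY 𝔻 h𝔻) 0 (-1) (by norm_num)).of_iso
      e.symm

section Flat

open TensorProduct

lemma ncRel_map_right {M L L' : Type} [AddCommGroup M] [Module Rᵐᵒᵖ M] [AddCommGroup L]
    [Module R L] [AddCommGroup L'] [Module R L'] (ψ : L →ₗ[R] L') {z : M ⊗[ℤ] L}
    (hz : z ∈ ncRel R M L) :
    map LinearMap.id ψ.toAddMonoidHom.toIntLinearMap z ∈ ncRel R M L' := by
  let φ := (map (LinearMap.id (R := ℤ) (M := M)) ψ.toAddMonoidHom.toIntLinearMap).toAddMonoidHom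
  suffices (ncRel R M L).map φ ≤ ncRel R M L' from this ⟨z, hz, rfl⟩
  rw [ncRel, AddMonoidHom.map_closure, AddSubgroup.closure_le]
  rintro _ ⟨_, ⟨r, m, n, rfl⟩, rfl⟩
  exact AddSubgroup.subset_closure ⟨r, m, ψ n, by simp [φ]⟩

lemma IsFlat.of_retract {M N : ModuleCat R} (hN : IsFlat N) (s : M ⟶ N) (r : N ⟶ M)
    (hsr : s ≫ r = 𝟙 M) : IsFlat M := by
  intro K P i hi z hz
  have hrs : r.hom.toAddMonoidHom.toIntLinearMap ∘ₗ s.hom.toAddMonoidHom.toIntLinearMap =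
      LinearMap.id := LinearMap.ext fun x => ConcreteCategory.congr_hom hsr x
  have hs := hN K P i hi (map LinearMap.id s.hom.toAddMonoidHom.toIntLinearMap z) (by
    simpa only [map_map, LinearMap.id_comp, LinearMap.comp_id] using ncRel_map_right s.hom hz)
  simpa only [map_map, hrs, LinearMap.id_comp, map_id, LinearMap.id_apply] using
    ncRel_map_right r.hom hs

lemma IsFlat.isLevel {L : ModuleCat R} (h : IsFlat L) : IsLevel L :=
  fun K P _ i _ _ hS _ _ => h K P i hS.mono_f

variable (R) in
/-- It vanishes on `ncRel` and induces the isomorphism `M ⊗_R R^(I) ≅ M^(I)`. -/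
noncomputable def tensorFinsuppScalar (M : Type) [AddCommGroup M] [Module Rᵐᵒᵖ M] (I : Type) :
    M ⊗[ℤ] (I →₀ R) →ₗ[ℤ] (I →₀ M) :=
  lift <| LinearMap.mk₂ ℤ (fun m f => f.mapRange (fun r => MulOpposite.op r • m) (by simp))
    (fun _ _ _ => by ext; simp [smul_add]) (fun _ _ _ => by ext; exact smul_comm _ _ _)
    (fun _ _ _ => by ext; simp [add_smul])
    (fun _ _ _ => by ext; simp [mul_smul, Int.cast_smul_eq_zsmul]; exact smul_comm _ _ _)

variable {M : Type} [AddCommGroup M] [Module Rᵐᵒᵖ M] {I : Type}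

lemma tensorFinsuppScalar_tmul_apply (m : M) (f : I →₀ R) (a : I) :
    tensorFinsuppScalar R M I (m ⊗ₜ f) a = MulOpposite.op (f a) • m :=
  rfl

lemma tensorFinsuppScalar_tmul_single (m : M) (a : I) (r : R) :
    tensorFinsuppScalar R M I (m ⊗ₜ Finsupp.single a r) =
      Finsupp.single a (MulOpposite.op r • m) := by
  ext b
  by_cases h : a = b <;> simp [tensorFinsuppScalar_tmul_apply, h]

lemma tensorFinsuppScalar_eq_zero_of_mem_ncRel {z : M ⊗[ℤ] (I →₀ R)}
    (hz : z ∈ ncRel R M (I →₀ R)) : tensorFinsuppScalar R M I z = 0 := by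
  suffices ncRel R M (I →₀ R) ≤ (tensorFinsuppScalar R M I).toAddMonoidHom.ker from this hz
  rw [ncRel, AddSubgroup.closure_le]
  rintro _ ⟨r, m, f, rfl⟩
  ext a
  simp [tensorFinsuppScalar_tmul_apply, mul_smul]

lemma tensorFinsuppScalar_map_apply {M' : Type} [AddCommGroup M'] [Module Rᵐᵒᵖ M']
    (φ : M →ₗ[Rᵐᵒᵖ] M') (z : M ⊗[ℤ] (I →₀ R)) (a : I) :
    tensorFinsuppScalar R M' I (map φ.toAddMonoidHom.toIntLinearMap LinearMap.id z) a =
      φ (tensorFinsuppScalar R M I z a) := by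
  induction z using TensorProduct.induction_on with
  | zero => simp
  | tmul m f => simp [tensorFinsuppScalar_tmul_apply]
  | add x y hx hy => simp [hx, hy]

lemma mem_ncRel_of_tensorFinsuppScalar_eq_zero {z : M ⊗[ℤ] (I →₀ R)}
    (hz : tensorFinsuppScalar R M I z = 0) : z ∈ ncRel R M (I →₀ R) := by
  let ρ : (I →₀ M) →+ M ⊗[ℤ] (I →₀ R) :=
    Finsupp.liftAddHom fun a => ((mk ℤ M (I →₀ R)).flip (Finsupp.single a 1)).toAddMonoidHom
  suffices ∀ z, z - ρ (tensorFinsuppScalar R M I z) ∈ ncRel R M (I →₀ R) by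
    simpa [hz] using this z
  intro z
  induction z using TensorProduct.induction_on with
  | zero => simp
  | add x y hx hy => simpa [add_sub_add_comm] using add_mem hx hy
  | tmul m f =>
    induction f using Finsupp.induction_linear with
    | zero => simp
    | add f g hf hg => simpa [tmul_add, add_sub_add_comm] using add_mem hf hg
    | single a r =>
      have hgen : (MulOpposite.op r • m) ⊗ₜ Finsupp.single a 1 -
          m ⊗ₜ (r • Finsupp.single a (1 : R)) ∈ ncRel R M (I →₀ R) :=
        AddSubgroup.subset_closure ⟨r, m, _, rfl⟩
      simpa [tensorFinsuppScalar_tmul_single, ρ] using neg_mem hgen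

lemma isFlat_finsupp (I : Type) : IsFlat (ModuleCat.of R (I →₀ R)) := by
  intro K P i hi z hz
  have hinj : Function.Injective i := (ModuleCat.mono_iff_injective i).1 hi
  refine mem_ncRel_of_tensorFinsuppScalar_eq_zero (Finsupp.ext fun a => hinj ?_)
  rw [← tensorFinsuppScalar_map_apply, tensorFinsuppScalar_eq_zero_of_mem_ncRel hz]
  simp

end Flat

section FreeDiskCover

/-- `⊕ₙ Dⁿ(R^(P_n))`, the sum of the disks on the free modules over the components of `P`. -/
noncomputable abbrev freeDiskCover (P : Ch R) : Ch R :=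
  ChainComplex.of (fun n => ModuleCat.of R ((P.X n →₀ R) × (P.X (n + 1) →₀ R)))
    (fun _ => ModuleCat.ofHom (LinearMap.inr R _ _ ∘ₗ LinearMap.fst R _ _))
    (fun _ => ModuleCat.hom_ext (LinearMap.ext fun _ => rfl))

variable (P : Ch R)

lemma freeDiskCover_d_apply (n : ℤ) (x : (freeDiskCover P).X (n + 1)) :
    (freeDiskCover P).d (n + 1) n x = (0, x.1) := by
  dsimp only [freeDiskCover]
  rw [ChainComplex.of_d]
  rfl

lemma freeDiskCover_exactAt (n : ℤ) : (freeDiskCover P).ExactAt n := by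
  obtain ⟨m, rfl⟩ : ∃ m, n = m + 1 := ⟨n - 1, by ring⟩
  rw [HomologicalComplex.exactAt_iff' _ (m + 1 + 1) (m + 1) m (ChainComplex.prev ℤ _)
    ((ChainComplex.next ℤ _).trans (by ring)), ShortComplex.moduleCat_exact_iff]
  rintro ⟨a, b⟩ hab
  change (freeDiskCover P).d (m + 1) m (a, b) = 0 at hab
  refine ⟨(b, 0), ?_⟩
  change (freeDiskCover P).d (m + 1 + 1) (m + 1) (b, 0) = (a, b)
  rw [freeDiskCover_d_apply] at hab ⊢
  exact Prod.ext (congrArg Prod.snd hab).symm rfl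

lemma isFlat_cycles_freeDiskCover (n : ℤ) : IsFlat ((freeDiskCover P).cycles n) := by
  obtain ⟨m, rfl⟩ : ∃ m, n = m + 1 := ⟨n - 1, by ring⟩
  have hnext : (ComplexShape.down ℤ).next (m + 1) = m := (ChainComplex.next ℤ _).trans (by ring)
  refine IsFlat.of_retract (isFlat_finsupp (R := R) (P.X (m + 1 + 1)))
    ((freeDiskCover P).iCycles (m + 1) ≫ ModuleCat.ofHom (LinearMap.snd R _ _))
    ((freeDiskCover P).liftCycles (ModuleCat.ofHom (LinearMap.inr R _ _)) m hnext ?_) ?_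
  · exact ModuleCat.hom_ext (LinearMap.ext fun b => freeDiskCover_d_apply P m (0, b))
  · rw [← cancel_mono ((freeDiskCover P).iCycles (m + 1)), Category.assoc,
      HomologicalComplex.liftCycles_i, Category.id_comp]
    refine ModuleCat.hom_ext (LinearMap.ext fun x => ?_)
    have hx : (freeDiskCover P).d (m + 1) m ((freeDiskCover P).iCycles (m + 1) x) = 0 :=
      ConcreteCategory.congr_hom ((freeDiskCover P).iCycles_d (m + 1) m) x
    rw [freeDiskCover_d_apply] at hx
    exact Prod.ext (congrArg Prod.snd hx).symm rfl

lemma isLevelComplex_freeDiskCover : IsLevelComplex (freeDiskCover P) :=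
  ⟨freeDiskCover_exactAt P, fun n => (isFlat_cycles_freeDiskCover P n).isLevel⟩

noncomputable def freeDiskCoverπ : freeDiskCover P ⟶ P where
  f n := ModuleCat.ofHom (Finsupp.linearCombination R id ∘ₗ LinearMap.fst R _ _ +
    (P.d (n + 1) n).hom ∘ₗ Finsupp.linearCombination R id ∘ₗ LinearMap.snd R _ _)
  comm' i j hij := by
    obtain rfl : i = j + 1 := hij.symm
    refine ModuleCat.hom_ext (LinearMap.ext fun x => ?_)
    simp

instance : Epi (freeDiskCoverπ P) :=
  HomologicalComplex.epi_of_epi_f _ fun n => (ModuleCat.epi_iff_surjective _).2 fun x =>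
    ⟨(Finsupp.single x 1, 0), by simp [freeDiskCoverπ]⟩

end FreeDiskCover

lemma HomIntoExact.of_projective {𝔻 : DCh R} (h𝔻 : IsACAcyclicProjCx 𝔻) (P : Ch R)
    [Projective P] : HomIntoExact 𝔻 P :=
  (h𝔻.2.2 _ (isLevelComplex_freeDiskCover P)).of_retract
    (Projective.factorThru (𝟙 P) (freeDiskCoverπ P)) (freeDiskCoverπ P) (by simp)

/-- `GP^⊥` is thick and contains all projective chain complexes. -/
theorem perp_of_gorACProj_thick_and_contains_projectives (R : Type) [Ring R] :
    IsThick (rightPerp {X : Ch R | IsGorACProj X}) ∧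
      ∀ P : Ch R, Projective P → P ∈ rightPerp {X : Ch R | IsGorACProj X} := by
  simp only [IsThick, mem_rightPerp_isGorACProj_iff]
  refine ⟨⟨?_, fun S hS => ⟨?_, ?_, ?_⟩⟩, ?_⟩
  · rintro A B ⟨s, r, hsr⟩ hB 𝔻 h𝔻
    exact (hB 𝔻 h𝔻).of_retract s r hsr
  · exact fun h₁ h₂ 𝔻 h𝔻 => homIntoExact_X₃ h𝔻.1 hS (h₁ 𝔻 h𝔻) (h₂ 𝔻 h𝔻)
  · exact fun h₁ h₃ 𝔻 h𝔻 => homIntoExact_X₂ h𝔻.1 hS (h₁ 𝔻 h𝔻) (h₃ 𝔻 h𝔻)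
  · exact fun h₂ h₃ 𝔻 h𝔻 => homIntoExact_X₁ h𝔻.1 hS (h₂ 𝔻 h𝔻) (h₃ 𝔻 h𝔻)
  · exact fun P _ 𝔻 h𝔻 => HomIntoExact.of_projective h𝔻 P

end GorensteinAC
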